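/- arXiv:1103.2574 — 7 statements merged into one kernel-verified Lean document; each statement's English description precedes it below -/
import Mathlib

section
/- Every convex multiplicative system of positively weighted means is equal to the power mean M_p for some p ∈ [1,∞]; that is, if M is a system of positively weighted means that is convex and multiplicative, then there exists p ∈ [1,∞] such that M(w,x) = M_p(w,x) for every n ≥ 1, every w ∈ Δ_n° and every x ∈ (ℝ≥0)^n. -/
open scoped NNReal ENNReal BigOperators

/-- The power mean `M_p` of order `p ∈ [0,∞]` with weights `w` and arguments `x`. -/
noncomputable def powerMean (p : ℝ≥0∞) {n : ℕ} (w x : Fin n → ℝ≥0) : ℝ≥0 :=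
  if p = ∞ then (Finset.univ.filter (fun i => 0 < w i)).sup x
  else if p = 0 then ∏ i, x i ^ ((w i : ℝ))
  else (∑ i, w i * x i ^ p.toReal) ^ (1 / p.toReal)

/-- A system of positively weighted means: for each `n`, a function
`M n : Δ_n° × ℝ≥0ⁿ → ℝ≥0` (the axioms are demanded only when `∑ w = 1` and all `w i > 0`),
satisfying functoriality for surjections, consistency and monotonicity. -/
structure PosMeanSystem where
  M : ∀ n : ℕ, (Fin n → ℝ≥0) → (Fin n → ℝ≥0) → ℝ≥0
  functorial : ∀ {m n : ℕ} (f : Fin m → Fin n), Function.Surjective f →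
    ∀ (w : Fin m → ℝ≥0), (∑ i, w i) = 1 → (∀ i, 0 < w i) → ∀ x : Fin n → ℝ≥0,
      M n (fun j => ∑ i ∈ Finset.univ.filter (fun i => f i = j), w i) x = M m w (x ∘ f)
  consistent : ∀ c : ℝ≥0, M 1 (fun _ => 1) (fun _ => c) = c
  mono : ∀ {n : ℕ} (w x y : Fin n → ℝ≥0), (∑ i, w i) = 1 → (∀ i, 0 < w i) →
    (∀ i, x i ≤ y i) → M n w x ≤ M n w y

/-- Multiplicativity of a system of positively weighted means, with respect to the fixed
bijection `finProdFinEquiv : Fin m × Fin n ≃ Fin (m * n)`. -/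
def PosMeanSystem.IsMultiplicative (S : PosMeanSystem) : Prop :=
  ∀ {m n : ℕ} (w x : Fin m → ℝ≥0) (v y : Fin n → ℝ≥0),
    (∑ i, w i) = 1 → (∀ i, 0 < w i) → (∑ j, v j) = 1 → (∀ j, 0 < v j) →
    S.M (m * n) (fun k => w (finProdFinEquiv.symm k).1 * v (finProdFinEquiv.symm k).2)
        (fun k => x (finProdFinEquiv.symm k).1 * y (finProdFinEquiv.symm k).2)
      = S.M m w x * S.M n v y

/-- Convexity of a system of positively weighted means. -/
def PosMeanSystem.IsConvex (S : PosMeanSystem) : Prop :=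
  ∀ {n : ℕ} (w x y : Fin n → ℝ≥0), (∑ i, w i) = 1 → (∀ i, 0 < w i) →
    S.M n w (fun i => (x i + y i) / 2) ≤ max (S.M n w x) (S.M n w y)

/-!
The two-point indicator mean `H(q) = M((q, 1 - q), (1, 0))` is at most `1`, multiplicative in
`q` (by multiplicativity of `M`) and monotone, and convexity gives `H(1/2) ≥ 1/2`; hence
`H(q) = q ^ c` with `0 ≤ c ≤ 1`, and by functoriality and homogeneity
`M(w, a • δ_t) = a * w_t ^ c`. If `c = 0` this already forces `M = max`. Otherwise put
`p = 1/c`: writing `x` as a sum of spikes, convexity and homogeneity bound `M(w, x)` above and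
below by `M_p(w, x)` up to factors linear in the number of points. Both means are multiplicative
and functorial, so applying these bounds to the `N`-th tensor power of `(w, x)`, pushed forward
to the at most `(N + 1) ^ n` letter-count vectors of words of length `N` (the method of types),
shows that `M(w, x) ^ N` and `M_p(w, x) ^ N` agree up to a factor polynomial in `N`. Letting
`N → ∞` gives `M(w, x) = M_p(w, x)`.
-/

open Finset Filter Topology

theorem eq_mul_of_map_add_of_monotoneOn {f : ℝ → ℝ}
    (hadd : ∀ s > 0, ∀ t > 0, f (s + t) = f s + f t) (hmono : MonotoneOn f (Set.Ioi 0))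
    {s : ℝ} (hs : 0 < s) : f s = f 1 * s := by
  have hnsmul : ∀ n : ℕ, ∀ t > 0, f ((n + 1) * t) = (n + 1) * f t := by
    intro n t ht
    induction n with
    | zero => simp
    | succ n ih =>
      rw [Nat.cast_succ, add_mul _ 1, one_mul, hadd _ (by positivity) _ ht, ih]
      ring
  have hnat : ∀ n : ℕ, f (n + 1) = (n + 1) * f 1 := fun n => by
    simpa using hnsmul n 1 one_pos
  have hnonneg : ∀ t > 0, 0 ≤ f t := fun t ht => by
    have h2 := hnsmul 1 t ht
    have := hmono ht (by positivity : (0 : ℝ) < (1 + 1) * t) (by linarith)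
    norm_num at h2 this
    linarith
  -- Squeeze `(N + 1) * s` between the consecutive integers `⌊(N + 1) * s⌋₊` and its successor.
  have key : ∀ N : ℕ, |f s - f 1 * s| * (N + 1) ≤ f 1 := by
    intro N
    set k := ⌊(N + 1) * s⌋₊
    have hk : (k : ℝ) ≤ (N + 1) * s := Nat.floor_le (by positivity)
    have hk' : (N + 1) * s < k + 1 := Nat.lt_floor_add_one _
    have hupper : f ((N + 1) * s) ≤ (k + 1) * f 1 :=
      hnat k ▸ hmono (by simp; positivity) (by simp; positivity) hk'.le
    have hlower : k * f 1 ≤ f ((N + 1) * s) := by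
      by_cases h0 : k = 0
      · rw [h0, Nat.cast_zero, zero_mul]; exact hnonneg _ (by positivity)
      · obtain ⟨j, hj⟩ := Nat.exists_eq_add_one_of_ne_zero h0
        rw [hj, Nat.cast_succ] at hk ⊢
        exact hnat j ▸ hmono (by simp; positivity) (by simp; positivity) hk
    have h1 := hnonneg 1 one_pos
    rw [hnsmul N s hs] at hupper hlower
    rw [← abs_of_pos (by positivity : (0 : ℝ) < N + 1), ← abs_mul, abs_le]
    constructor <;> nlinarith
  have hlim : Tendsto (fun N : ℕ => f 1 / ((N : ℝ) + 1)) atTop (𝓝 0) :=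
    tendsto_const_div_atTop_nhds_zero_nat (f 1) |>.comp (tendsto_add_atTop_nat 1)
      |>.congr (by simp)
  have := ge_of_tendsto' hlim fun N => (le_div_iff₀ (by positivity)).2 (key N)
  exact sub_eq_zero.1 (abs_nonpos_iff.1 this)

theorem exists_eq_rpow_of_map_mul_of_monotoneOn {H : ℝ≥0 → ℝ≥0}
    (hmul : ∀ q ∈ Set.Ioo 0 1, ∀ r ∈ Set.Ioo 0 1, H (q * r) = H q * H r)
    (hmono : MonotoneOn H (Set.Ioo 0 1)) (hpos : ∀ q ∈ Set.Ioo 0 1, 0 < H q) :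
    ∃ c : ℝ, ∀ q ∈ Set.Ioo 0 1, H q = q ^ c := by
  set g : ℝ → ℝ := fun s => -Real.log (H (Real.exp (-s)).toNNReal)
  have hmem : ∀ s > 0, (Real.exp (-s)).toNNReal ∈ Set.Ioo 0 1 := fun s hs => by
    simp [Real.exp_lt_one_iff, hs, Real.exp_pos]
  have hadd : ∀ s > 0, ∀ t > 0, g (s + t) = g s + g t := by
    intro s hs t ht
    simp only [g, neg_add, Real.exp_add, Real.toNNReal_mul (Real.exp_pos _).le,
      hmul _ (hmem s hs) _ (hmem t ht), NNReal.coe_mul,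
      Real.log_mul (NNReal.coe_pos.2 (hpos _ (hmem s hs))).ne'
        (NNReal.coe_pos.2 (hpos _ (hmem t ht))).ne']
  have hgmono : MonotoneOn g (Set.Ioi 0) := fun s hs t ht hst => by
    simp only [g, neg_le_neg_iff]
    refine Real.log_le_log (hpos _ (hmem t ht)) ?_
    exact_mod_cast hmono (hmem t ht) (hmem s hs)
      (Real.toNNReal_le_toNNReal (Real.exp_le_exp.2 (neg_le_neg hst)))
  refine ⟨g 1, fun q hq => ?_⟩
  have hq0 : (0 : ℝ) < q := hq.1
  have hs : 0 < -Real.log q := neg_pos.2 (Real.log_neg hq0 (by exact_mod_cast hq.2))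
  have hlin := eq_mul_of_map_add_of_monotoneOn hadd hgmono hs
  simp only [g, neg_neg, Real.exp_log hq0, Real.toNNReal_coe] at hlin
  apply NNReal.coe_injective
  rw [NNReal.coe_rpow, Real.rpow_def_of_pos hq0, ← Real.exp_log (NNReal.coe_pos.2 (hpos q hq))]
  congr 1
  linarith

theorem NNReal.le_of_pow_le_poly_mul_pow {a b C : ℝ≥0} {m : ℕ}
    (h : ∀ N : ℕ, a ^ N ≤ C * (N + 1) ^ m * b ^ N) : a ≤ b := by
  by_contra! hba
  have ha : (0 : ℝ) < a := b.2.trans_lt hba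
  set ρ : ℝ := b / a
  have hρ : |ρ| < 1 := by
    rw [abs_of_nonneg (by positivity), div_lt_one ha]; exact_mod_cast hba
  have hbound : ∀ N : ℕ, ρ ≤ C * ((N + 1 : ℕ) : ℝ) ^ m * ρ ^ (N + 1) := fun N => by
    have hN : 1 ≤ C * ((N + 1 : ℕ) : ℝ) ^ m * ρ ^ N := by
      rw [div_pow, mul_div_assoc', le_div_iff₀ (pow_pos ha N), one_mul]
      exact_mod_cast h N
    calc ρ = 1 * ρ := (one_mul ρ).symm
      _ ≤ C * ((N + 1 : ℕ) : ℝ) ^ m * ρ ^ N * ρ := by gcongr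
      _ = C * ((N + 1 : ℕ) : ℝ) ^ m * ρ ^ (N + 1) := by ring
  have htend : Tendsto (fun N : ℕ => C * ((N + 1 : ℕ) : ℝ) ^ m * ρ ^ (N + 1)) atTop (𝓝 0) := by
    simpa [mul_assoc] using
      ((tendsto_pow_const_mul_const_pow_of_abs_lt_one m hρ).comp
        (tendsto_add_atTop_nat 1)).const_mul (C : ℝ)
  have hb : b = 0 := by
    have : (b : ℝ) ≤ 0 := by
      simpa [ρ, div_nonpos_iff, ha.not_ge] using ge_of_tendsto' htend hbound
    exact_mod_cast le_antisymm this b.2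
  have h1 := h 1
  simp only [hb, pow_one, mul_zero, nonpos_iff_eq_zero] at h1
  exact hba.ne (by rw [h1, hb])

theorem NNReal.inv_two_mem_Ioo : (2⁻¹ : ℝ≥0) ∈ Set.Ioo 0 1 :=
  ⟨by norm_num, by norm_num⟩

theorem Pi.single_apply_le_self {ι M : Type*} [DecidableEq ι] [AddMonoid M] [PartialOrder M]
    [CanonicallyOrderedAdd M] (x : ι → M) (i : ι) : Pi.single i (x i) ≤ x := fun j => by
  by_cases h : j = i <;> simp [h]

variable {α β : Type*} [Fintype α]

def openSimplex (α : Type*) [Fintype α] : Set (α → ℝ≥0) :=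
  {w | ∑ a, w a = 1 ∧ ∀ a, 0 < w a}

theorem nonempty_of_mem_openSimplex {w : α → ℝ≥0} (hw : w ∈ openSimplex α) : Nonempty α := by
  by_contra h
  simpa [not_nonempty_iff.1 h] using hw.1

theorem comp_equiv_mem_openSimplex [Fintype β] (e : α ≃ β) {w : β → ℝ≥0}
    (hw : w ∈ openSimplex β) : w ∘ e ∈ openSimplex α :=
  ⟨by rw [← hw.1]; exact e.sum_comp w, fun a => hw.2 _⟩

theorem mul_mem_openSimplex [Fintype β] {w : α → ℝ≥0} {v : β → ℝ≥0} (hw : w ∈ openSimplex α)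
    (hv : v ∈ openSimplex β) : (fun p : α × β => w p.1 * v p.2) ∈ openSimplex (α × β) :=
  ⟨by simp [Fintype.sum_prod_type, ← mul_sum, hv.1, hw.1],
    fun p => mul_pos (hw.2 _) (hv.2 _)⟩

section pushforward

variable [DecidableEq β]

def pushforward (f : α → β) (w : α → ℝ≥0) (b : β) : ℝ≥0 :=
  ∑ a with f a = b, w a

theorem pushforward_mem_openSimplex [Fintype β] {f : α → β} (hf : Function.Surjective f)
    {w : α → ℝ≥0} (hw : w ∈ openSimplex α) : pushforward f w ∈ openSimplex β := by
  refine ⟨by rw [← hw.1]; exact sum_fiberwise _ f w, fun b => ?_⟩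
  obtain ⟨a, rfl⟩ := hf b
  exact sum_pos' (fun _ _ => (hw.2 _).le) ⟨a, by simp, hw.2 a⟩

theorem pushforward_comp_equiv (e : α ≃ β) (w : β → ℝ≥0) : pushforward e (w ∘ e) = w := by
  funext b
  rw [pushforward, sum_filter, sum_eq_single (e.symm b)
    (fun a _ h => if_neg (by rwa [← e.eq_symm_apply])) (by simp)]
  simp

theorem pushforward_conj {α' β' : Type*} [Fintype α'] [DecidableEq β'] (eα : α ≃ α')
    (eβ : β ≃ β') (f : α → β) (w : α → ℝ≥0) :
    pushforward (eβ ∘ f ∘ eα.symm) (w ∘ eα.symm) = pushforward f w ∘ eβ.symm := by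
  funext b
  simp only [pushforward, Function.comp_apply, sum_filter]
  rw [← eα.sum_comp]
  simp [← Equiv.eq_symm_apply]

end pushforward

def twoPoint (q : ℝ≥0) (b : Bool) : ℝ≥0 := if b then q else 1 - q

theorem twoPoint_mem_openSimplex {q : ℝ≥0} (hq : q ∈ Set.Ioo 0 1) :
    twoPoint q ∈ openSimplex Bool :=
  ⟨by simp [twoPoint, add_tsub_cancel_of_le hq.2.le],
    fun b => by cases b <;> simp [twoPoint, hq.1, hq.2]⟩

theorem pushforward_eq_twoPoint (p : α → Bool) {w : α → ℝ≥0} (hw : ∑ a, w a = 1) :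
    pushforward p w = twoPoint (∑ a with p a, w a) := by
  funext b
  cases b
  · refine eq_tsub_of_add_eq ?_
    rw [← hw, add_comm, ← sum_filter_add_sum_filter_not univ (fun a => p a = true)]
    simp [pushforward]
  · rfl

noncomputable def rpowMean (p : ℝ) (w x : α → ℝ≥0) : ℝ≥0 :=
  (∑ a, w a * x a ^ p) ^ p⁻¹

theorem rpowMean_pushforward [Fintype β] [DecidableEq β] (p : ℝ) (f : α → β) (w : α → ℝ≥0)
    (y : β → ℝ≥0) : rpowMean p (pushforward f w) y = rpowMean p w (y ∘ f) := by
  simp only [rpowMean, pushforward, sum_mul]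
  rw [← sum_fiberwise univ f fun a => w a * (y ∘ f) a ^ p]
  congr 1
  exact sum_congr rfl fun b _ => sum_congr rfl fun a ha => by simp [(mem_filter.1 ha).2]

def tensorPow (w : α → ℝ≥0) (N : ℕ) (σ : Fin N → α) : ℝ≥0 :=
  ∏ k, w (σ k)

theorem sum_tensorPow (w : α → ℝ≥0) (N : ℕ) : ∑ σ, tensorPow w N σ = (∑ a, w a) ^ N := by
  simp [tensorPow, ← Fintype.prod_sum]

theorem tensorPow_mem_openSimplex {w : α → ℝ≥0} (hw : w ∈ openSimplex α) (N : ℕ) :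
    tensorPow w N ∈ openSimplex (Fin N → α) :=
  ⟨by rw [sum_tensorPow, hw.1, one_pow], fun _ => prod_pos fun _ _ => hw.2 _⟩

theorem rpowMean_tensorPow (p : ℝ) (w x : α → ℝ≥0) (N : ℕ) :
    rpowMean p (tensorPow w N) (tensorPow x N) = rpowMean p w x ^ N := by
  have h : ∑ σ, tensorPow w N σ * tensorPow x N σ ^ p = (∑ a, w a * x a ^ p) ^ N := by
    simp only [tensorPow, ← NNReal.finsetProd_rpow, ← prod_mul_distrib]
    exact sum_tensorPow (fun a => w a * x a ^ p) N
  rw [rpowMean, h, rpowMean, ← NNReal.rpow_natCast, ← NNReal.rpow_natCast, ← NNReal.rpow_mul,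
    ← NNReal.rpow_mul, mul_comm]

section letterCount

variable [DecidableEq α]

def letterCount {N : ℕ} (σ : Fin N → α) (a : α) : Fin (N + 1) :=
  ⟨#{k | σ k = a}, Nat.lt_succ_of_le ((card_filter_le _ _).trans (card_fin N).le)⟩

theorem tensorPow_eq_prod_pow_letterCount (x : α → ℝ≥0) {N : ℕ} (σ : Fin N → α) :
    tensorPow x N σ = ∏ a, x a ^ (letterCount σ a : ℕ) := by
  rw [tensorPow, ← prod_fiberwise' univ σ x]
  simp [letterCount]

theorem card_range_letterCount_le (N : ℕ) :
    Fintype.card (Set.range (letterCount : (Fin N → α) → α → Fin (N + 1))) ≤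
      (N + 1) ^ Fintype.card α :=
  (Fintype.card_subtype_le _).trans (by simp)

end letterCount

namespace PosMeanSystem

variable (S : PosMeanSystem)

noncomputable def mean (w x : α → ℝ≥0) : ℝ≥0 :=
  S.M _ (w ∘ (Fintype.equivFin α).symm) (x ∘ (Fintype.equivFin α).symm)

noncomputable def indicatorMean (q : ℝ≥0) : ℝ≥0 :=
  S.mean (twoPoint q) fun b => if b then 1 else 0

variable {S} {p : ℝ}

theorem M_pushforward {m n : ℕ} {f : Fin m → Fin n} (hf : Function.Surjective f)
    {w : Fin m → ℝ≥0} (hw : w ∈ openSimplex (Fin m)) (x : Fin n → ℝ≥0) :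
    S.M n (pushforward f w) x = S.M m w (x ∘ f) :=
  S.functorial f hf w hw.1 hw.2 x

theorem mean_pushforward [Fintype β] [DecidableEq β] {f : α → β} (hf : Function.Surjective f)
    {w : α → ℝ≥0} (hw : w ∈ openSimplex α) (y : β → ℝ≥0) :
    S.mean (pushforward f w) y = S.mean w (y ∘ f) := by
  set eα := Fintype.equivFin α
  set eβ := Fintype.equivFin β
  have h := S.M_pushforward (f := eβ ∘ f ∘ eα.symm) (by simpa using hf)
    (comp_equiv_mem_openSimplex eα.symm hw) (y ∘ eβ.symm)
  rw [pushforward_conj] at h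
  simpa [mean, Function.comp_def] using h

theorem mean_fin {n : ℕ} {w : Fin n → ℝ≥0} (hw : w ∈ openSimplex (Fin n)) (x : Fin n → ℝ≥0) :
    S.mean w x = S.M n w x := by
  set e := (Fintype.equivFin (Fin n)).symm
  have h := S.M_pushforward e.surjective (comp_equiv_mem_openSimplex e hw) x
  rwa [pushforward_comp_equiv, eq_comm] at h

theorem mean_comp_equiv [Fintype β] (e : α ≃ β) {w : β → ℝ≥0} (hw : w ∈ openSimplex β)
    (x : β → ℝ≥0) : S.mean (w ∘ e) (x ∘ e) = S.mean w x := by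
  classical
  rw [← S.mean_pushforward e.surjective (comp_equiv_mem_openSimplex e hw),
    pushforward_comp_equiv]

theorem mean_mono {w : α → ℝ≥0} (hw : w ∈ openSimplex α) {x y : α → ℝ≥0} (hxy : x ≤ y) :
    S.mean w x ≤ S.mean w y :=
  S.mono _ _ _ (comp_equiv_mem_openSimplex _ hw).1 (comp_equiv_mem_openSimplex _ hw).2
    fun _ => hxy _

theorem mean_const {w : α → ℝ≥0} (hw : w ∈ openSimplex α) (t : ℝ≥0) :
    S.mean w (fun _ => t) = t := by
  obtain ⟨a⟩ := nonempty_of_mem_openSimplex hw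
  have h1 : pushforward (fun _ : α => (0 : Fin 1)) w = fun _ => 1 := by
    funext b
    rw [Subsingleton.elim b 0, pushforward, filter_true_of_mem (by simp), hw.1]
  have h := S.mean_pushforward (f := fun _ : α => (0 : Fin 1))
    (fun _ => ⟨a, Subsingleton.elim _ _⟩) hw (fun _ => t)
  rw [h1, S.mean_fin ⟨by simp, fun _ => one_pos⟩] at h
  exact h ▸ S.consistent t

theorem mean_midpoint_le (hconv : S.IsConvex) {w : α → ℝ≥0} (hw : w ∈ openSimplex α)
    (x y : α → ℝ≥0) :
    S.mean w (fun a => (x a + y a) / 2) ≤ max (S.mean w x) (S.mean w y) :=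
  hconv _ _ _ (comp_equiv_mem_openSimplex _ hw).1 (comp_equiv_mem_openSimplex _ hw).2

theorem mean_prod (hmul : S.IsMultiplicative) [Fintype β] {w : α → ℝ≥0} {v : β → ℝ≥0}
    (hw : w ∈ openSimplex α) (hv : v ∈ openSimplex β) (x : α → ℝ≥0) (y : β → ℝ≥0) :
    S.mean (fun p : α × β => w p.1 * v p.2) (fun p => x p.1 * y p.2) =
      S.mean w x * S.mean v y := by
  set eα := Fintype.equivFin α
  set eβ := Fintype.equivFin β
  set e := (eα.prodCongr eβ).trans finProdFinEquiv
  have hw' := comp_equiv_mem_openSimplex eα.symm hw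
  have hv' := comp_equiv_mem_openSimplex eβ.symm hv
  rw [← S.mean_comp_equiv e.symm (mul_mem_openSimplex hw hv), S.mean_fin
    (comp_equiv_mem_openSimplex e.symm (mul_mem_openSimplex hw hv))]
  exact hmul (w ∘ eα.symm) (x ∘ eα.symm) (v ∘ eβ.symm) (y ∘ eβ.symm) hw'.1 hw'.2 hv'.1 hv'.2

theorem mean_const_mul (hmul : S.IsMultiplicative) {w : α → ℝ≥0} (hw : w ∈ openSimplex α)
    (c : ℝ≥0) (x : α → ℝ≥0) : S.mean w (fun a => c * x a) = c * S.mean w x := by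
  have hone : (fun _ : Unit => (1 : ℝ≥0)) ∈ openSimplex Unit := ⟨by simp, fun _ => one_pos⟩
  calc S.mean w (fun a => c * x a)
      = S.mean (fun p : α × Unit => w p.1 * 1) (fun p => x p.1 * c) := by
        rw [← S.mean_comp_equiv (Equiv.prodPUnit α) hw]
        congr 1 <;> funext p <;> simp [mul_comm]
    _ = c * S.mean w x := by
        rw [S.mean_prod hmul hw hone x (fun _ => c), S.mean_const hone, mul_comm]

theorem mean_add_le (hconv : S.IsConvex) (hmul : S.IsMultiplicative) {w : α → ℝ≥0}
    (hw : w ∈ openSimplex α) (x y : α → ℝ≥0) :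
    S.mean w (x + y) ≤ 2 * max (S.mean w x) (S.mean w y) := by
  have h : x + y = fun a => 2 * ((x a + y a) / 2) := by
    funext a; simp [mul_div_cancel₀]
  rw [h, S.mean_const_mul hmul hw]
  gcongr
  exact S.mean_midpoint_le hconv hw x y

/-- Splitting `s` into halves, rather than peeling off one term at a time, keeps the constant
linear in `#s`. -/
theorem mean_sum_le (hconv : S.IsConvex) (hmul : S.IsMultiplicative) {w : α → ℝ≥0}
    (hw : w ∈ openSimplex α) {ι : Type*} (u : ι → α → ℝ≥0) (k : ℕ) {s : Finset ι}
    (hs : #s ≤ 2 ^ k) : S.mean w (∑ j ∈ s, u j) ≤ 2 ^ k * s.sup fun j => S.mean w (u j) := by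
  classical
  induction k generalizing s with
  | zero =>
    obtain hs | hs := Nat.le_one_iff_eq_zero_or_eq_one.1 (by simpa using hs)
    · rw [card_eq_zero.1 hs, sum_empty]
      exact (S.mean_const hw 0).trans_le zero_le
    · obtain ⟨j, rfl⟩ := card_eq_one.1 hs
      simp
  | succ k ih =>
    obtain ⟨t, hts, ht⟩ := exists_subset_card_eq (min_le_left #s (2 ^ k))
    have hsup : ∀ r ⊆ s, #r ≤ 2 ^ k →
        S.mean w (∑ j ∈ r, u j) ≤ 2 ^ k * s.sup fun j => S.mean w (u j) := fun r hr hcard =>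
      (ih hcard).trans (by gcongr)
    rw [← sum_sdiff hts]
    calc S.mean w (∑ j ∈ s \ t, u j + ∑ j ∈ t, u j)
        ≤ 2 * max (S.mean w (∑ j ∈ s \ t, u j)) (S.mean w (∑ j ∈ t, u j)) :=
          S.mean_add_le hconv hmul hw _ _
      _ ≤ 2 * (2 ^ k * s.sup fun j => S.mean w (u j)) := by
          gcongr
          refine max_le (hsup _ sdiff_subset ?_) (hsup t hts (ht ▸ min_le_right _ _))
          rw [card_sdiff_of_subset hts, ht]
          omega
      _ = 2 ^ (k + 1) * s.sup fun j => S.mean w (u j) := by ring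

theorem mean_comp_bool {p : α → Bool} (hp : Function.Surjective p) {w : α → ℝ≥0}
    (hw : w ∈ openSimplex α) (y : Bool → ℝ≥0) :
    S.mean w (y ∘ p) = S.mean (twoPoint (∑ a with p a, w a)) y := by
  rw [← S.mean_pushforward hp hw, pushforward_eq_twoPoint p hw.1]

theorem mean_tensorPow (hmul : S.IsMultiplicative) {w : α → ℝ≥0} (hw : w ∈ openSimplex α)
    (x : α → ℝ≥0) (N : ℕ) : S.mean (tensorPow w N) (tensorPow x N) = S.mean w x ^ N := by
  induction N with
  | zero =>
    have h1 : ∀ v : α → ℝ≥0, tensorPow v 0 = fun _ => 1 := fun v => funext fun _ => prod_empty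
    rw [h1 x, S.mean_const (tensorPow_mem_openSimplex hw 0), pow_zero]
  | succ N ih =>
    set e := Fin.consEquiv fun _ : Fin (N + 1) => α
    have hcons : ∀ v : α → ℝ≥0, tensorPow v (N + 1) ∘ e = fun p => v p.1 * tensorPow v N p.2 :=
      fun v => funext fun p => by simp [tensorPow, Fin.prod_univ_succ, e]
    rw [← S.mean_comp_equiv e (tensorPow_mem_openSimplex hw _), hcons, hcons,
      S.mean_prod hmul hw (tensorPow_mem_openSimplex hw N), ih, pow_succ']

theorem indicatorMean_mul (hmul : S.IsMultiplicative) {q r : ℝ≥0} (hq : q ∈ Set.Ioo 0 1)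
    (hr : r ∈ Set.Ioo 0 1) : S.indicatorMean (q * r) = S.indicatorMean q * S.indicatorMean r := by
  have h := S.mean_prod hmul (twoPoint_mem_openSimplex hq) (twoPoint_mem_openSimplex hr)
    (fun b => if b then 1 else 0) (fun b => if b then 1 else 0)
  have hind : (fun p : Bool × Bool => (if p.1 then (1 : ℝ≥0) else 0) * if p.2 then 1 else 0) =
      (fun b => if b then 1 else 0) ∘ fun p => p.1 && p.2 := by
    funext ⟨b₁, b₂⟩; cases b₁ <;> cases b₂ <;> simp
  rw [hind, S.mean_comp_bool (fun b => ⟨(b, true), Bool.and_true b⟩)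
    (mul_mem_openSimplex (twoPoint_mem_openSimplex hq) (twoPoint_mem_openSimplex hr))] at h
  unfold indicatorMean
  convert h using 3
  simp [sum_filter, Fintype.sum_prod_type, twoPoint]

theorem indicatorMean_le_one {q : ℝ≥0} (hq : q ∈ Set.Ioo 0 1) : S.indicatorMean q ≤ 1 :=
  (S.mean_mono (twoPoint_mem_openSimplex hq) fun b => by cases b <;> simp).trans_eq
    (S.mean_const (twoPoint_mem_openSimplex hq) 1)

theorem indicatorMean_monotoneOn (hmul : S.IsMultiplicative) :
    MonotoneOn S.indicatorMean (Set.Ioo 0 1) := by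
  intro q hq r hr hqr
  rcases hqr.eq_or_lt with rfl | hlt
  · rfl
  have hqr : q / r ∈ Set.Ioo 0 1 := ⟨div_pos hq.1 hr.1, (div_lt_one hr.1).2 hlt⟩
  calc S.indicatorMean q = S.indicatorMean (q / r * r) := by rw [div_mul_cancel₀ _ hr.1.ne']
    _ = S.indicatorMean (q / r) * S.indicatorMean r := S.indicatorMean_mul hmul hqr hr
    _ ≤ S.indicatorMean r := mul_le_of_le_one_left zero_le (S.indicatorMean_le_one hqr)

/-- Convexity applied to `2 • 1_{true}` and `2 • 1_{false}`, whose midpoint is constant. -/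
theorem inv_two_le_indicatorMean_inv_two (hconv : S.IsConvex) (hmul : S.IsMultiplicative) :
    2⁻¹ ≤ S.indicatorMean 2⁻¹ := by
  have hw := twoPoint_mem_openSimplex NNReal.inv_two_mem_Ioo
  set ind : Bool → ℝ≥0 := fun b => if b then 1 else 0
  have hflip : S.mean (twoPoint 2⁻¹) (ind ∘ not) = S.indicatorMean 2⁻¹ := by
    rw [S.mean_comp_bool (fun b => ⟨!b, b.not_not⟩) hw, indicatorMean]
    congr
    simp only [sum_filter, twoPoint]
    simpa using tsub_eq_of_eq_add (add_halves (1 : ℝ≥0)).symm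
  have h := S.mean_midpoint_le hconv hw (fun b => 2 * ind b) (fun b => 2 * ind (!b))
  have hmid : (fun b => (2 * ind b + 2 * ind (!b)) / 2) = fun _ => (1 : ℝ≥0) := by
    funext b; cases b <;> simp [ind]
  rw [hmid, S.mean_const hw, S.mean_const_mul hmul hw, S.mean_const_mul hmul hw,
    ← Function.comp_def ind not, hflip,
    show S.mean (twoPoint 2⁻¹) ind = S.indicatorMean 2⁻¹ from rfl, max_self] at h
  exact NNReal.inv_le_of_le_mul h

theorem indicatorMean_pos (hconv : S.IsConvex) (hmul : S.IsMultiplicative) {q : ℝ≥0}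
    (hq : q ∈ Set.Ioo 0 1) : 0 < S.indicatorMean q := by
  have hmem : ∀ n : ℕ, (2⁻¹ : ℝ≥0) ^ (n + 1) ∈ Set.Ioo 0 1 := fun n =>
    ⟨by positivity, pow_lt_one₀ zero_le NNReal.inv_two_mem_Ioo.2 n.succ_ne_zero⟩
  have hpow : ∀ n : ℕ, S.indicatorMean (2⁻¹ ^ (n + 1)) = S.indicatorMean 2⁻¹ ^ (n + 1) := by
    intro n
    induction n with
    | zero => simp
    | succ n ih =>
      rw [pow_succ, S.indicatorMean_mul hmul (hmem n) NNReal.inv_two_mem_Ioo, ih, ← pow_succ]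
  obtain ⟨n, hn⟩ := exists_pow_lt_of_lt_one hq.1 NNReal.inv_two_mem_Ioo.2
  calc 0 < S.indicatorMean 2⁻¹ ^ (n + 1) :=
        pow_pos ((inv_pos.2 two_pos).trans_le (S.inv_two_le_indicatorMean_inv_two hconv hmul)) _
    _ = S.indicatorMean (2⁻¹ ^ (n + 1)) := (hpow n).symm
    _ ≤ S.indicatorMean q := S.indicatorMean_monotoneOn hmul (hmem n) hq
        ((pow_le_pow_of_le_one zero_le NNReal.inv_two_mem_Ioo.2.le n.le_succ).trans hn.le)

theorem exists_indicatorMean_eq_rpow (hconv : S.IsConvex) (hmul : S.IsMultiplicative) :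
    ∃ c ∈ Set.Icc (0 : ℝ) 1, ∀ q ∈ Set.Ioo 0 1, S.indicatorMean q = q ^ c := by
  obtain ⟨c, hc⟩ := exists_eq_rpow_of_map_mul_of_monotoneOn (fun q hq r hr =>
    S.indicatorMean_mul hmul hq hr) (S.indicatorMean_monotoneOn hmul)
    fun q hq => S.indicatorMean_pos hconv hmul hq
  have hle := S.indicatorMean_le_one NNReal.inv_two_mem_Ioo
  have hge := S.inv_two_le_indicatorMean_inv_two hconv hmul
  rw [hc _ NNReal.inv_two_mem_Ioo] at hle hge
  have h2 : (0 : ℝ) < 2⁻¹ ∧ (2⁻¹ : ℝ) < 1 := by norm_num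
  refine ⟨c, ⟨?_, ?_⟩, hc⟩
  · rw [← NNReal.coe_le_coe, NNReal.coe_rpow] at hle
    simpa using (Real.rpow_le_rpow_left_iff_of_base_lt_one h2.1 h2.2 (z := 0)).1
      (by simpa using hle)
  · rw [← NNReal.coe_le_coe, NNReal.coe_rpow] at hge
    simpa using (Real.rpow_le_rpow_left_iff_of_base_lt_one h2.1 h2.2 (y := 1)).1
      (by simpa using hge)

theorem mean_single [DecidableEq α] (hmul : S.IsMultiplicative) {c : ℝ}
    (hH : ∀ q ∈ Set.Ioo 0 1, S.indicatorMean q = q ^ c) {w : α → ℝ≥0} (hw : w ∈ openSimplex α)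
    (t : α) (a : ℝ≥0) : S.mean w (Pi.single t a) = a * w t ^ c := by
  by_cases hα : ∀ s, s = t
  · have : Subsingleton α := ⟨fun s s' => (hα s).trans (hα s').symm⟩
    have hwt : w t = 1 := by rw [← hw.1, Fintype.sum_subsingleton w t]
    have hconst : Pi.single t a = fun _ => a := funext fun s => by rw [hα s, Pi.single_eq_same]
    simp [hconst, S.mean_const hw, hwt]
  obtain ⟨s, hs⟩ := not_forall.1 hα
  have hwt : w t ∈ Set.Ioo 0 1 :=
    ⟨hw.2 t, hw.1 ▸ single_lt_sum hs (mem_univ t) (mem_univ s) (hw.2 s) fun _ _ _ => zero_le⟩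
  have hsingle : Pi.single t a = (fun b => a * if b then 1 else 0) ∘ fun s => decide (s = t) := by
    funext s; by_cases h : s = t <;> simp [h]
  have hp : Function.Surjective fun s => decide (s = t) := by
    rintro (_ | _)
    exacts [⟨s, by simpa using hs⟩, ⟨t, by simp⟩]
  have hsum : ∑ a with decide (a = t) = true, w a = w t := by simp [filter_eq']
  rw [hsingle, S.mean_comp_bool hp hw, hsum, S.mean_const_mul hmul (twoPoint_mem_openSimplex hwt),
    ← indicatorMean, hH _ hwt]

theorem mean_le_two_card_mul_sup (hconv : S.IsConvex) (hmul : S.IsMultiplicative) {c : ℝ}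
    (hH : ∀ q ∈ Set.Ioo 0 1, S.indicatorMean q = q ^ c) {w : α → ℝ≥0} (hw : w ∈ openSimplex α)
    (V : α → ℝ≥0) : S.mean w V ≤ 2 * Fintype.card α * univ.sup fun t => V t * w t ^ c := by
  classical
  have := nonempty_of_mem_openSimplex hw
  set k := Nat.log 2 (Fintype.card α) + 1
  have hk : Fintype.card α ≤ 2 ^ k := (Nat.lt_pow_succ_log_self one_lt_two _).le
  have hk' : (2 : ℝ≥0) ^ k ≤ 2 * Fintype.card α := by
    rw [pow_succ']
    exact_mod_cast Nat.mul_le_mul_left 2 (Nat.pow_log_le_self 2 Fintype.card_ne_zero)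
  calc S.mean w V = S.mean w (∑ t, Pi.single t (V t)) := by rw [univ_sum_single]
    _ ≤ 2 ^ k * univ.sup fun t => S.mean w (Pi.single t (V t)) :=
        S.mean_sum_le hconv hmul hw _ k (by simpa using hk)
    _ = 2 ^ k * univ.sup fun t => V t * w t ^ c := by simp_rw [S.mean_single hmul hH hw]
    _ ≤ 2 * Fintype.card α * univ.sup fun t => V t * w t ^ c := by gcongr

theorem mean_eq_sup (hmul : S.IsMultiplicative)
    (hH : ∀ q ∈ Set.Ioo 0 1, S.indicatorMean q = q ^ (0 : ℝ)) {w : α → ℝ≥0}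
    (hw : w ∈ openSimplex α) (x : α → ℝ≥0) : S.mean w x = univ.sup x := by
  classical
  refine le_antisymm ((S.mean_mono hw fun a => le_sup (mem_univ a)).trans_eq (S.mean_const hw _))
    (Finset.sup_le fun a _ => ?_)
  simpa [S.mean_single hmul hH hw] using S.mean_mono hw (Pi.single_apply_le_self x a)

theorem mean_le_two_card_mul_rpowMean (hconv : S.IsConvex) (hmul : S.IsMultiplicative)
    (hp : 0 < p) (hH : ∀ q ∈ Set.Ioo 0 1, S.indicatorMean q = q ^ p⁻¹) {w : α → ℝ≥0}
    (hw : w ∈ openSimplex α) (V : α → ℝ≥0) :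
    S.mean w V ≤ 2 * Fintype.card α * rpowMean p w V := by
  refine (S.mean_le_two_card_mul_sup hconv hmul hH hw V).trans ?_
  gcongr
  refine Finset.sup_le fun t _ => ?_
  calc V t * w t ^ p⁻¹ = (w t * V t ^ p) ^ p⁻¹ := by
        rw [NNReal.mul_rpow, NNReal.rpow_rpow_inv hp.ne', mul_comm]
    _ ≤ rpowMean p w V :=
        NNReal.rpow_le_rpow (single_le_sum (f := fun a => w a * V a ^ p) (fun _ _ => zero_le)
          (mem_univ t)) (inv_nonneg.2 hp.le)

theorem rpowMean_le_card_mul_mean (hmul : S.IsMultiplicative) (hp : 1 ≤ p)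
    (hH : ∀ q ∈ Set.Ioo 0 1, S.indicatorMean q = q ^ p⁻¹) {w : α → ℝ≥0}
    (hw : w ∈ openSimplex α) (V : α → ℝ≥0) :
    rpowMean p w V ≤ Fintype.card α * S.mean w V := by
  classical
  have := nonempty_of_mem_openSimplex hw
  obtain ⟨t, -, ht⟩ := exists_max_image univ (fun t => w t * V t ^ p) univ_nonempty
  have hp0 : p ≠ 0 := by positivity
  calc rpowMean p w V ≤ (Fintype.card α * (w t * V t ^ p)) ^ p⁻¹ := by
        rw [rpowMean]
        gcongr
        simpa using sum_le_card_nsmul univ _ _ fun s _ => ht s (mem_univ s)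
    _ = (Fintype.card α : ℝ≥0) ^ p⁻¹ * S.mean w (Pi.single t (V t)) := by
        rw [S.mean_single hmul hH hw, NNReal.mul_rpow, NNReal.mul_rpow, NNReal.rpow_rpow_inv hp0,
          mul_comm (V t)]
    _ ≤ Fintype.card α * S.mean w V := by
        gcongr
        · calc (Fintype.card α : ℝ≥0) ^ p⁻¹ ≤ (Fintype.card α : ℝ≥0) ^ (1 : ℝ) :=
                NNReal.rpow_le_rpow_of_exponent_le (by exact_mod_cast Fintype.card_pos)
                  (inv_le_one_of_one_le₀ hp)
            _ = Fintype.card α := NNReal.rpow_one _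
        · exact S.mean_mono hw (Pi.single_apply_le_self V t)

theorem mean_pow_le_and_rpowMean_pow_le [DecidableEq α] (hconv : S.IsConvex)
    (hmul : S.IsMultiplicative) (hp : 1 ≤ p)
    (hH : ∀ q ∈ Set.Ioo 0 1, S.indicatorMean q = q ^ p⁻¹) {w : α → ℝ≥0}
    (hw : w ∈ openSimplex α) (x : α → ℝ≥0) (N : ℕ) :
    S.mean w x ^ N ≤ 2 * ((N : ℝ≥0) + 1) ^ Fintype.card α * rpowMean p w x ^ N ∧
      rpowMean p w x ^ N ≤ 2 * ((N : ℝ≥0) + 1) ^ Fintype.card α * S.mean w x ^ N := by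
  set q := Set.rangeFactorization (letterCount : (Fin N → α) → α → Fin (N + 1))
  have hq : Function.Surjective q := Set.rangeFactorization_surjective
  have hP := pushforward_mem_openSimplex hq (tensorPow_mem_openSimplex hw N)
  set V : Set.range (letterCount : (Fin N → α) → α → Fin (N + 1)) → ℝ≥0 :=
    fun t => ∏ a, x a ^ (t.1 a : ℕ)
  have hX : tensorPow x N = V ∘ q := funext (tensorPow_eq_prod_pow_letterCount x)
  have hA : S.mean (pushforward q (tensorPow w N)) V = S.mean w x ^ N := by
    rw [S.mean_pushforward hq (tensorPow_mem_openSimplex hw N), ← hX, S.mean_tensorPow hmul hw]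
  have hB : rpowMean p (pushforward q (tensorPow w N)) V = rpowMean p w x ^ N := by
    rw [rpowMean_pushforward, ← hX, rpowMean_tensorPow]
  have hcard : (Fintype.card (Set.range (letterCount : (Fin N → α) → α → Fin (N + 1))) : ℝ≥0) ≤
      ((N : ℝ≥0) + 1) ^ Fintype.card α := by
    exact_mod_cast card_range_letterCount_le N
  rw [← hA, ← hB]
  constructor
  · calc _ ≤ _ := S.mean_le_two_card_mul_rpowMean hconv hmul (by positivity) hH hP V
      _ ≤ _ := by gcongr
  · calc _ ≤ _ := S.rpowMean_le_card_mul_mean hmul hp hH hP V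
      _ ≤ _ := by
        rw [mul_assoc]
        exact le_mul_of_one_le_left zero_le one_le_two |>.trans' (by gcongr)

theorem mean_eq_rpowMean (hconv : S.IsConvex) (hmul : S.IsMultiplicative) (hp : 1 ≤ p)
    (hH : ∀ q ∈ Set.Ioo 0 1, S.indicatorMean q = q ^ p⁻¹) {w : α → ℝ≥0}
    (hw : w ∈ openSimplex α) (x : α → ℝ≥0) : S.mean w x = rpowMean p w x := by
  classical
  have h := S.mean_pow_le_and_rpowMean_pow_le hconv hmul hp hH hw x
  exact le_antisymm (NNReal.le_of_pow_le_poly_mul_pow fun N => (h N).1)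
    (NNReal.le_of_pow_le_poly_mul_pow fun N => (h N).2)

end PosMeanSystem

/-- Every convex multiplicative system of positively weighted means is the power mean `M_p`
for some `p ∈ [1,∞]`. -/
theorem convex_multiplicative_posMeanSystem_eq_powerMean
    (S : PosMeanSystem) (hconv : S.IsConvex) (hmul : S.IsMultiplicative) :
    ∃ p : ℝ≥0∞, 1 ≤ p ∧ ∀ (n : ℕ), 1 ≤ n → ∀ (w x : Fin n → ℝ≥0),
      (∑ i, w i) = 1 → (∀ i, 0 < w i) → S.M n w x = powerMean p w x := by
  obtain ⟨c, ⟨hc0, hc1⟩, hH⟩ := S.exists_indicatorMean_eq_rpow hconv hmul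
  rcases hc0.eq_or_lt with rfl | hc
  · refine ⟨⊤, le_top, fun n _ w x hw hpos => ?_⟩
    rw [← S.mean_fin ⟨hw, hpos⟩, S.mean_eq_sup hmul hH ⟨hw, hpos⟩, powerMean, if_pos rfl,
      filter_true_of_mem fun i _ => hpos i]
  · have hp : 1 ≤ c⁻¹ := (one_le_inv₀ hc).2 hc1
    refine ⟨ENNReal.ofReal c⁻¹, ENNReal.one_le_ofReal.2 hp, fun n _ w x hw hpos => ?_⟩
    rw [← S.mean_fin ⟨hw, hpos⟩, S.mean_eq_rpowMean hconv hmul hp (by simpa using hH) ⟨hw, hpos⟩,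
      powerMean, if_neg ENNReal.ofReal_ne_top, if_neg (ENNReal.ofReal_pos.2 (by positivity)).ne',
      ENNReal.toReal_ofReal (by positivity), rpowMean, one_div]
end

section
/- (Transfer) Every system of means M has the transfer property: for all n ≥ 2, w ∈ Δ_n, x ∈ (ℝ≥0)^n and 0 ≤ ε ≤ w_n, if x_n ≤ x_{n−1} then M(w, x) ≤ M((w_1,…,w_{n−2}, w_{n−1} + ε, w_n − ε), x). -/
open scoped NNReal ENNReal BigOperators

/-- A system of means: for each `n`, a function `M n : Δ_n × ℝ≥0ⁿ → ℝ≥0`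
(defined on all of `ℝ≥0ⁿ × ℝ≥0ⁿ`, with the axioms demanded only when `∑ w = 1`),
satisfying functoriality, consistency and monotonicity. -/
structure MeanSystem where
  M : ∀ n : ℕ, (Fin n → ℝ≥0) → (Fin n → ℝ≥0) → ℝ≥0
  functorial : ∀ {m n : ℕ} (f : Fin m → Fin n) (w : Fin m → ℝ≥0),
    (∑ i, w i) = 1 → ∀ x : Fin n → ℝ≥0,
      M n (fun j => ∑ i ∈ Finset.univ.filter (fun i => f i = j), w i) x = M m w (x ∘ f)
  consistent : ∀ c : ℝ≥0, M 1 (fun _ => 1) (fun _ => c) = c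
  mono : ∀ {n : ℕ} (w x y : Fin n → ℝ≥0), (∑ i, w i) = 1 →
    (∀ i, x i ≤ y i) → M n w x ≤ M n w y

/-- Multiplicativity of a system of means, with respect to the fixed bijection
`finProdFinEquiv : Fin m × Fin n ≃ Fin (m * n)`. -/
def MeanSystem.IsMultiplicative (S : MeanSystem) : Prop :=
  ∀ {m n : ℕ} (w x : Fin m → ℝ≥0) (v y : Fin n → ℝ≥0),
    (∑ i, w i) = 1 → (∑ j, v j) = 1 →
    S.M (m * n) (fun k => w (finProdFinEquiv.symm k).1 * v (finProdFinEquiv.symm k).2)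
        (fun k => x (finProdFinEquiv.symm k).1 * y (finProdFinEquiv.symm k).2)
      = S.M m w x * S.M n v y

/-- Convexity of a system of means. -/
def MeanSystem.IsConvex (S : MeanSystem) : Prop :=
  ∀ {n : ℕ} (w x y : Fin n → ℝ≥0), (∑ i, w i) = 1 →
    S.M n w (fun i => (x i + y i) / 2) ≤ max (S.M n w x) (S.M n w y)

lemma pushforward_snoc_aux {n : ℕ} (v : Fin n → ℝ≥0) (c : ℝ≥0) (t : Fin n) :
    (fun j => ∑ i ∈ Finset.univ.filter
        (fun i => (Fin.snoc (fun i => i) t : Fin (n+1) → Fin n) i = j),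
      (Fin.snoc v c : Fin (n+1) → ℝ≥0) i) = Function.update v t (v t + c) := by
  funext j
  rw [Finset.sum_filter, Fin.sum_univ_castSucc]
  simp only [Fin.snoc_castSucc, Fin.snoc_last]
  rw [Finset.sum_ite_eq' Finset.univ j v]
  by_cases hj : j = t
  · subst hj; simp [Function.update_self]
  · simp [Function.update_of_ne hj, hj, Ne.symm hj]

/-- (Transfer) For a system of means, transferring weight `ε` from the last argument to the
second-to-last one increases the mean, provided the last argument is the smaller of the two.
(Here `n = m + 2 ≥ 2`.) -/
theorem meanSystem_transfer (S : MeanSystem) (m : ℕ)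
    (w x : Fin (m + 2) → ℝ≥0) (hw : (∑ i, w i) = 1) (ε : ℝ≥0)
    (hε : ε ≤ w (Fin.last (m + 1)))
    (hx : x (Fin.last (m + 1)) ≤ x ((Fin.last m).castSucc)) :
    S.M (m + 2) w x ≤
      S.M (m + 2)
        (Function.update
          (Function.update w ((Fin.last m).castSucc) (w ((Fin.last m).castSucc) + ε))
          (Fin.last (m + 1)) (w (Fin.last (m + 1)) - ε)) x := by
  set a : Fin (m+2) := (Fin.last m).castSucc with ha
  set b : Fin (m+2) := Fin.last (m+1) with hb
  have hab : a ≠ b := ne_of_lt (Fin.castSucc_lt_last _)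
  set w' : Fin (m+2) → ℝ≥0 := Function.update w b (w b - ε) with hw'
  set u : Fin (m+3) → ℝ≥0 := Fin.snoc w' ε with hu
  have hcancel : w b - ε + ε = w b := tsub_add_cancel_of_le hε
  have hsumu : ∑ i, u i = 1 := by
    rw [hu, Fin.sum_univ_castSucc]
    simp only [Fin.snoc_castSucc, Fin.snoc_last]
    rw [hw', Finset.sum_update_of_mem (Finset.mem_univ b),
      add_right_comm, hcancel,
      ← Finset.sum_update_of_mem (Finset.mem_univ b), Function.update_eq_self, hw]
  set g : Fin (m+3) → Fin (m+2) := Fin.snoc (fun i => i) b with hg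
  set h : Fin (m+3) → Fin (m+2) := Fin.snoc (fun i => i) a with hh
  have hgw : (fun j => ∑ i ∈ Finset.univ.filter (fun i => g i = j), u i) = w := by
    rw [hg, hu, pushforward_snoc_aux]
    rw [hw', Function.update_idem]
    simp only [Function.update_self]
    rw [hcancel, Function.update_eq_self]
  have hhw : (fun j => ∑ i ∈ Finset.univ.filter (fun i => h i = j), u i) =
      Function.update (Function.update w a (w a + ε)) b (w b - ε) := by
    rw [hh, hu, pushforward_snoc_aux, hw']
    rw [Function.update_comm hab.symm]
    rw [Function.update_of_ne hab]
  have e1 : S.M (m+2) w x = S.M (m+3) u (x ∘ g) := by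
    rw [← hgw]; exact S.functorial g u hsumu x
  have e2 : S.M (m+3) u (x ∘ h) =
      S.M (m+2) (Function.update (Function.update w a (w a + ε)) b (w b - ε)) x := by
    rw [← hhw]; exact (S.functorial h u hsumu x).symm
  rw [e1, ← e2]
  refine S.mono u (x ∘ g) (x ∘ h) hsumu ?_
  intro i
  refine Fin.lastCases ?_ ?_ i
  · simp only [Function.comp_apply, hg, hh, Fin.snoc_last]; exact hx
  · intro j; simp [hg, hh, Fin.snoc_castSucc]
end

section
/- (Homogeneity) Every multiplicative system of means M is homogeneous: M(w, c·x) = c·M(w, x) for all n ≥ 1, w ∈ Δ_n, x ∈ (ℝ≥0)^n and c ∈ ℝ≥0, where c·x = (c x_1,…,c x_n). -/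
open scoped NNReal ENNReal BigOperators

/-- (Homogeneity) Every multiplicative system of means is homogeneous:
`M(w, c·x) = c·M(w, x)`. -/
theorem meanSystem_homogeneous (S : MeanSystem) (hmul : S.IsMultiplicative)
    (n : ℕ) (hn : 1 ≤ n) (w x : Fin n → ℝ≥0) (hw : (∑ i, w i) = 1) (c : ℝ≥0) :
    S.M n w (fun i => c * x i) = c * S.M n w x := by
  set f : Fin n → Fin (1 * n) := fun j => finProdFinEquiv (0, j) with hf
  have hsum1 : (∑ i : Fin 1, (fun _ : Fin 1 => (1 : ℝ≥0)) i) = 1 := by simp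
  have hfun := S.functorial f w hw
    (fun k => (fun _ : Fin 1 => c) (finProdFinEquiv.symm k).1 * x (finProdFinEquiv.symm k).2)
  have hmu := hmul (fun _ : Fin 1 => (1 : ℝ≥0)) (fun _ : Fin 1 => c) w x hsum1 hw
  have hwts : (fun k : Fin (1 * n) => ∑ i ∈ Finset.univ.filter (fun i => f i = k), w i)
      = fun k => (fun _ : Fin 1 => (1 : ℝ≥0)) (finProdFinEquiv.symm k).1
          * w (finProdFinEquiv.symm k).2 := by
    funext k
    obtain ⟨⟨i0, j0⟩, hp⟩ : ∃ p, finProdFinEquiv p = k :=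
      ⟨finProdFinEquiv.symm k, Equiv.apply_symm_apply _ _⟩
    have hi0 : i0 = 0 := Subsingleton.elim _ _
    subst hi0; subst hp
    have hiff : ∀ i : Fin n, f i = finProdFinEquiv (0, j0) ↔ i = j0 := by
      intro i
      constructor
      · intro h
        have := finProdFinEquiv.injective h
        exact (Prod.mk.injEq _ _ _ _).mp this |>.2
      · rintro rfl; rfl
    have hfilter : Finset.univ.filter (fun i => f i = finProdFinEquiv (0, j0)) = {j0} := by
      ext i; simp [hiff i]
    simp [hfilter]
  rw [hwts] at hfun
  have hcomp : ((fun k => (fun _ : Fin 1 => c) (finProdFinEquiv.symm k).1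
      * x (finProdFinEquiv.symm k).2) ∘ f) = fun i => c * x i := by
    funext j
    simp only [f, Function.comp_apply, Equiv.symm_apply_apply]
  rw [hcomp] at hfun
  rw [← hfun, hmu, S.consistent]
end

section
/- For any multiplicative system of means M, the function θ : (0,1) → ℝ≥0 defined by θ(s) = M((s, 1−s), (1, 0)) satisfies θ(s·s') = θ(s)·θ(s') for all s, s' ∈ (0,1). -/
open scoped NNReal ENNReal BigOperators

/-- For a multiplicative system of means, the function `θ(s) = M((s, 1−s), (1, 0))`
satisfies `θ(s s') = θ(s) θ(s')` for `s, s' ∈ (0,1)`. -/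
theorem meanSystem_theta_multiplicative (S : MeanSystem) (hmul : S.IsMultiplicative)
    (s s' : ℝ≥0) (hs0 : 0 < s) (hs1 : s < 1) (hs'0 : 0 < s') (hs'1 : s' < 1) :
    S.M 2 ![s * s', 1 - s * s'] ![1, 0]
      = S.M 2 ![s, 1 - s] ![1, 0] * S.M 2 ![s', 1 - s'] ![1, 0] := by
  have hs : s ≤ 1 := hs1.le
  have hs' : s' ≤ 1 := hs'1.le
  have hss : s * s' ≤ 1 := by
    calc s * s' ≤ 1 * 1 := mul_le_mul' hs hs'
    _ = 1 := one_mul 1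
  have hw : (∑ i, (![s, 1 - s] : Fin 2 → ℝ≥0) i) = 1 := by
    simp [Fin.sum_univ_two, add_tsub_cancel_of_le hs]
  have hv : (∑ i, (![s', 1 - s'] : Fin 2 → ℝ≥0) i) = 1 := by
    simp [Fin.sum_univ_two, add_tsub_cancel_of_le hs']
  have key := hmul ![s, 1 - s] ![1, 0] ![s', 1 - s'] ![1, 0] hw hv
  rw [← key]
  set W : Fin (2 * 2) → ℝ≥0 :=
    fun k => ![s, 1 - s] (finProdFinEquiv.symm k).1 * ![s', 1 - s'] (finProdFinEquiv.symm k).2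
    with hWdef
  have h0 : W 0 = s * s' := by simp [hWdef]; rfl
  have h1 : W 1 = s * (1 - s') := by simp [hWdef]; rfl
  have h2 : W 2 = (1 - s) * s' := by simp [hWdef]; rfl
  have h3 : W 3 = (1 - s) * (1 - s') := by simp [hWdef]; rfl
  have hWsum : (∑ i, W i) = 1 := by
    rw [Fin.sum_univ_four, h0, h1, h2, h3]
    apply NNReal.coe_injective
    push_cast [NNReal.coe_sub hs, NNReal.coe_sub hs']
    ring
  have hfun := S.functorial (n := 2) ![0, 1, 1, 1] W hWsum ![1, 0]
  have e0 : finProdFinEquiv.symm (0 : Fin (2 * 2)) = ((0 : Fin 2), (0 : Fin 2)) := by decide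
  have e1 : finProdFinEquiv.symm (1 : Fin (2 * 2)) = ((0 : Fin 2), (1 : Fin 2)) := by decide
  have e2 : finProdFinEquiv.symm (2 : Fin (2 * 2)) = ((1 : Fin 2), (0 : Fin 2)) := by decide
  have e3 : finProdFinEquiv.symm (3 : Fin (2 * 2)) = ((1 : Fin 2), (1 : Fin 2)) := by decide
  have hX : (![1, 0] : Fin 2 → ℝ≥0) ∘ ![0, 1, 1, 1]
      = fun k : Fin (2 * 2) =>
          ![(1 : ℝ≥0), 0] (finProdFinEquiv.symm k).1 * ![(1 : ℝ≥0), 0] (finProdFinEquiv.symm k).2 := by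
    funext k
    fin_cases k
    · show (1 : ℝ≥0) = ![(1 : ℝ≥0), 0] (finProdFinEquiv.symm (0 : Fin (2 * 2))).1
        * ![(1 : ℝ≥0), 0] (finProdFinEquiv.symm (0 : Fin (2 * 2))).2
      rw [e0]; norm_num
    · show (0 : ℝ≥0) = ![(1 : ℝ≥0), 0] (finProdFinEquiv.symm (1 : Fin (2 * 2))).1
        * ![(1 : ℝ≥0), 0] (finProdFinEquiv.symm (1 : Fin (2 * 2))).2
      rw [e1]; norm_num
    · show (0 : ℝ≥0) = ![(1 : ℝ≥0), 0] (finProdFinEquiv.symm (2 : Fin (2 * 2))).1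
        * ![(1 : ℝ≥0), 0] (finProdFinEquiv.symm (2 : Fin (2 * 2))).2
      rw [e2]; norm_num
    · show (0 : ℝ≥0) = ![(1 : ℝ≥0), 0] (finProdFinEquiv.symm (3 : Fin (2 * 2))).1
        * ![(1 : ℝ≥0), 0] (finProdFinEquiv.symm (3 : Fin (2 * 2))).2
      rw [e3]; norm_num
  have hP : (fun j => ∑ i ∈ Finset.univ.filter (fun i => (![0, 1, 1, 1] : Fin (2 * 2) → Fin 2) i = j), W i)
      = ![s * s', 1 - s * s'] := by
    funext j
    fin_cases j
    · show (∑ i ∈ Finset.univ.filter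
          (fun i => (![0, 1, 1, 1] : Fin (2 * 2) → Fin 2) i = 0), W i) = s * s'
      have hf : Finset.univ.filter (fun i => (![0, 1, 1, 1] : Fin (2 * 2) → Fin 2) i = 0)
          = {0} := by decide
      rw [hf, Finset.sum_singleton, h0]
    · show (∑ i ∈ Finset.univ.filter
          (fun i => (![0, 1, 1, 1] : Fin (2 * 2) → Fin 2) i = 1), W i) = 1 - s * s'
      have hf : Finset.univ.filter (fun i => (![0, 1, 1, 1] : Fin (2 * 2) → Fin 2) i = 1)
          = {1, 2, 3} := by decide
      rw [hf, Finset.sum_insert (by decide), Finset.sum_insert (by decide),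
        Finset.sum_singleton, h1, h2, h3]
      apply NNReal.coe_injective
      push_cast [NNReal.coe_sub hs, NNReal.coe_sub hs', NNReal.coe_sub hss]
      ring
  rw [hP, hX] at hfun
  exact hfun
end

section
/- For any system of means M, the function θ : (0,1) → ℝ≥0 defined by θ(s) = M((s, 1−s), (1, 0)) is non-strictly increasing: if s ≤ s' in (0,1) then θ(s) ≤ θ(s'). -/
open scoped NNReal ENNReal BigOperators

def pushWeights {m n : ℕ} (f : Fin m → Fin n) (w : Fin m → ℝ≥0) : Fin n → ℝ≥0 :=
  fun j => ∑ i ∈ Finset.univ.filter (fun i => f i = j), w i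

namespace MeanSystem

theorem M_pushWeights_le (S : MeanSystem) {m n : ℕ} (f g : Fin m → Fin n)
    (w : Fin m → ℝ≥0) (hw : ∑ i, w i = 1) (x : Fin n → ℝ≥0) (hfg : ∀ i, x (f i) ≤ x (g i)) :
    S.M n (pushWeights f w) x ≤ S.M n (pushWeights g w) x := by
  calc S.M n (pushWeights f w) x = S.M m w (x ∘ f) := S.functorial f w hw x
    _ ≤ S.M m w (x ∘ g) := S.mono w _ _ hw hfg
    _ = S.M n (pushWeights g w) x := (S.functorial g w hw x).symm

end MeanSystem

section ThreeWeights

variable {s s' : ℝ≥0}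

theorem sum_three_weights_eq_one (hss' : s ≤ s') (hs'1 : s' ≤ 1) :
    ∑ i, ![s, s' - s, 1 - s'] i = 1 := by
  simp only [Fin.sum_univ_three, Matrix.cons_val_zero, Matrix.cons_val_one,
    Matrix.cons_val_two, Matrix.head_cons, Matrix.tail_cons]
  rw [add_tsub_cancel_of_le hss', add_tsub_cancel_of_le hs'1]

theorem pushWeights_three_merge_right (hss' : s ≤ s') (hs'1 : s' ≤ 1) :
    pushWeights ![0, 1, 1] ![s, s' - s, 1 - s'] = ![s, 1 - s] := by
  funext j
  fin_cases j
  · simp [pushWeights, Finset.sum_filter, Fin.sum_univ_three]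
  · simp [pushWeights, Finset.sum_filter, Fin.sum_univ_three, add_comm (s' - s),
      tsub_add_tsub_cancel hs'1 hss']

theorem pushWeights_three_merge_left (hss' : s ≤ s') :
    pushWeights ![0, 0, 1] ![s, s' - s, 1 - s'] = ![s', 1 - s'] := by
  funext j
  fin_cases j
  · simp [pushWeights, Finset.sum_filter, Fin.sum_univ_three, add_tsub_cancel_of_le hss']
  · simp [pushWeights, Finset.sum_filter, Fin.sum_univ_three]

end ThreeWeights

/-- Split `(0,1)` as `[0,s) ∪ [s,s') ∪ [s',1)`: both two-point weights are pushforwards of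
`(s, s' - s, 1 - s')`, and the middle atom is sent to `0` for `θ(s)` but to `1` for `θ(s')`. -/
theorem meanSystem_theta_monotone_general (S : MeanSystem)
    (s s' : ℝ≥0) (hss' : s ≤ s') (hs'1 : s' < 1) :
    S.M 2 ![s, 1 - s] ![1, 0] ≤ S.M 2 ![s', 1 - s'] ![1, 0] := by
  rw [← pushWeights_three_merge_right hss' hs'1.le, ← pushWeights_three_merge_left hss']
  refine S.M_pushWeights_le _ _ _ (sum_three_weights_eq_one hss' hs'1.le) _ fun i => ?_
  fin_cases i <;> simp

/-- For any system of means, the function `θ(s) = M((s, 1−s), (1, 0))` is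
(non-strictly) increasing on `(0,1)`. -/
theorem meanSystem_theta_monotone (S : MeanSystem)
    (s s' : ℝ≥0) (hs0 : 0 < s) (hss' : s ≤ s') (hs'1 : s' < 1) :
    S.M 2 ![s, 1 - s] ![1, 0] ≤ S.M 2 ![s', 1 - s'] ![1, 0] :=
  meanSystem_theta_monotone_general S s s' hss' hs'1
end

section
/- (Rational approximation of weightings) Let M be a system of means, n ≥ 1, w ∈ Δ_n, x ∈ (ℝ≥0)^n and δ > 0. Then there exist w', w'' ∈ Δ_n with all coordinates rational such that M(w', x) ≥ M(w, x) ≥ M(w'', x), ‖w − w'‖_∞ < δ and ‖w − w''‖_∞ < δ. -/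
open scoped NNReal ENNReal BigOperators

/-! Functoriality along a coupling of `w` and `v`, followed by monotonicity, shows that moving
mass from arbitrary coordinates onto one where `x` is maximal cannot decrease the mean, and onto
one where `x` is minimal cannot increase it. Hence it suffices to round all but one coordinate
of `w` down to nearby rationals and to put the missing mass on an argmax (for `w'`) or an argmin
(for `w''`) of `x`. -/

open Finset

lemma eq_of_sum_eq_of_forall_ne {ι M : Type*} [Fintype ι] [DecidableEq ι]
    [AddCancelCommMonoid M] {a b : ι → M} (j : ι)
    (hsum : ∑ i, a i = ∑ i, b i) (hne : ∀ i, i ≠ j → a i = b i) : a = b := by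
  funext i
  by_cases hij : i = j
  · subst hij
    rw [← add_sum_erase _ _ (mem_univ i), ← add_sum_erase _ _ (mem_univ i),
      sum_congr rfl fun k hk => hne k (ne_of_mem_erase hk)] at hsum
    exact add_right_cancel hsum
  · exact hne i hij

section Pushforward

variable {α β κ : Type*} [Fintype α] [Fintype β] [DecidableEq κ]

def weightPushforward (f : α → κ) (u : α → ℝ≥0) : κ → ℝ≥0 :=
  fun j => ∑ a ∈ univ.filter (fun a => f a = j), u a

lemma sum_weightPushforward [Fintype κ] (f : α → κ) (u : α → ℝ≥0) :
    ∑ j, weightPushforward f u j = ∑ a, u a :=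
  sum_fiberwise univ f u

lemma weightPushforward_comp_equiv (e : β ≃ α) (f : α → κ) (u : α → ℝ≥0) :
    weightPushforward (f ∘ e) (u ∘ e) = weightPushforward f u := by
  funext j
  simp only [weightPushforward, sum_filter]
  exact Fintype.sum_equiv e _ _ fun _ => rfl

lemma weightPushforward_sumElim (f : α → κ) (g : β → κ) (u : α → ℝ≥0) (v : β → ℝ≥0) :
    weightPushforward (Sum.elim f g) (Sum.elim u v) =
      weightPushforward f u + weightPushforward g v := by
  funext j
  simp only [weightPushforward, sum_filter, Fintype.sum_sum_type, Sum.elim_inl, Sum.elim_inr,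
    Pi.add_apply]
  congr

lemma weightPushforward_id [Fintype κ] (u : κ → ℝ≥0) : weightPushforward id u = u := by
  funext j
  simp [weightPushforward, sum_filter]

lemma weightPushforward_const (j : κ) (u : α → ℝ≥0) :
    weightPushforward (fun _ => j) u = Pi.single j (∑ a, u a) := by
  funext i
  by_cases h : j = i
  · subst h; simp [weightPushforward]
  · simp [weightPushforward, h, Ne.symm h]

end Pushforward

section ShiftCoupling

variable {ι : Type*} [Fintype ι] [DecidableEq ι]

/-- The mass `w i - v i` at `inl i` travels from `i` to `j`, the common mass `min (w i) (v i)`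
at `inr i` stays at `i`. -/
def shiftCoupling (w v : ι → ℝ≥0) : ι ⊕ ι → ℝ≥0 :=
  Sum.elim (w - v) (w ⊓ v)

lemma weightPushforward_shiftCoupling_left (w v : ι → ℝ≥0) :
    weightPushforward (Sum.elim id id) (shiftCoupling w v) = w := by
  funext i
  simp only [shiftCoupling, weightPushforward_sumElim, weightPushforward_id, Pi.add_apply,
    Pi.sub_apply, Pi.inf_apply]
  exact tsub_add_min

lemma weightPushforward_shiftCoupling_right {w v : ι → ℝ≥0} {j : ι}
    (hsum : ∑ i, w i = ∑ i, v i) (hvw : ∀ i, i ≠ j → v i ≤ w i) :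
    weightPushforward (Sum.elim (fun _ => j) id) (shiftCoupling w v) = v := by
  refine eq_of_sum_eq_of_forall_ne j ?_ fun i hij => ?_
  · rw [sum_weightPushforward, ← hsum, ← sum_weightPushforward (Sum.elim id id),
      weightPushforward_shiftCoupling_left]
  · simp [shiftCoupling, weightPushforward_sumElim, weightPushforward_id,
      weightPushforward_const, hij, hvw i hij]

lemma sum_shiftCoupling (w v : ι → ℝ≥0) : ∑ a, shiftCoupling w v a = ∑ i, w i := by
  rw [← sum_weightPushforward (Sum.elim id id), weightPushforward_shiftCoupling_left]

end ShiftCoupling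

namespace MeanSystem

variable (S : MeanSystem) {n : ℕ}

lemma M_weightPushforward_le {α : Type*} [Fintype α] (u : α → ℝ≥0) (hu : ∑ a, u a = 1)
    (f g : α → Fin n) (x : Fin n → ℝ≥0) (hfg : ∀ a, x (f a) ≤ x (g a)) :
    S.M n (weightPushforward f u) x ≤ S.M n (weightPushforward g u) x := by
  set e := (Fintype.equivFin α).symm
  have he : ∑ i, (u ∘ e) i = 1 := by rw [← hu]; exact Fintype.sum_equiv e _ _ fun _ => rfl
  rw [← weightPushforward_comp_equiv e f, ← weightPushforward_comp_equiv e g]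
  calc S.M n (weightPushforward (f ∘ e) (u ∘ e)) x = S.M _ (u ∘ e) (x ∘ f ∘ e) :=
        S.functorial _ _ he x
    _ ≤ S.M _ (u ∘ e) (x ∘ g ∘ e) := S.mono _ _ _ he fun i => hfg (e i)
    _ = S.M n (weightPushforward (g ∘ e) (u ∘ e)) x := (S.functorial _ _ he x).symm

lemma M_le_M_of_shift_to_max {w v x : Fin n → ℝ≥0} {j : Fin n} (hw : ∑ i, w i = 1)
    (hv : ∑ i, v i = 1) (hvw : ∀ i, i ≠ j → v i ≤ w i) (hx : ∀ i, x i ≤ x j) :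
    S.M n w x ≤ S.M n v x := by
  conv_lhs => rw [← weightPushforward_shiftCoupling_left w v]
  conv_rhs => rw [← weightPushforward_shiftCoupling_right (hw.trans hv.symm) hvw]
  exact S.M_weightPushforward_le _ ((sum_shiftCoupling w v).trans hw) _ _ x fun a => by
    cases a <;> simp [hx]

lemma M_le_M_of_shift_to_min {w v x : Fin n → ℝ≥0} {j : Fin n} (hw : ∑ i, w i = 1)
    (hv : ∑ i, v i = 1) (hvw : ∀ i, i ≠ j → v i ≤ w i) (hx : ∀ i, x j ≤ x i) :
    S.M n v x ≤ S.M n w x := by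
  conv_lhs => rw [← weightPushforward_shiftCoupling_right (hw.trans hv.symm) hvw]
  conv_rhs => rw [← weightPushforward_shiftCoupling_left w v]
  exact S.M_weightPushforward_le _ ((sum_shiftCoupling w v).trans hw) _ _ x fun a => by
    cases a <;> simp [hx]

end MeanSystem

lemma exists_rat_weights_approx {n : ℕ} {w : Fin n → ℝ≥0} (hw : ∑ i, w i = 1) (j : Fin n)
    {δ : ℝ} (hδ : 0 < δ) :
    ∃ v : Fin n → ℝ≥0, (∀ i, ∃ q : ℚ, (v i : ℝ) = q) ∧ ∑ i, v i = 1 ∧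
      (∀ i, i ≠ j → v i ≤ w i) ∧ ∀ i, |(w i : ℝ) - v i| < δ := by
  have hn : (0 : ℝ) < n := Nat.cast_pos.mpr j.pos
  have hround : ∀ i, ∃ q : ℚ, 0 ≤ q ∧ (q : ℝ) ≤ w i ∧ (w i : ℝ) - δ / n < q := by
    intro i
    obtain ⟨q, hq⟩ := exists_rat_btwn (sub_lt_self (w i : ℝ) (div_pos hδ hn))
    exact ⟨max q 0, le_max_right _ _, by push_cast; exact max_le hq.2.le (w i).2,
      by push_cast; exact hq.1.trans_le (le_max_left _ _)⟩
  choose q hq0 hqw hwq using hround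
  have hwj : (w j : ℝ) = 1 - ∑ i ∈ univ.erase j, (w i : ℝ) := by
    rw [eq_sub_iff_add_eq]; exact_mod_cast (add_sum_erase univ w (mem_univ j)).trans hw
  -- the rounding errors of the other coordinates accumulate on `j`
  have herr_nonneg : 0 ≤ ∑ i ∈ univ.erase j, ((w i : ℝ) - q i) :=
    sum_nonneg fun i _ => sub_nonneg.2 (hqw i)
  have herr_lt : ∑ i ∈ univ.erase j, ((w i : ℝ) - q i) < δ :=
    calc ∑ i ∈ univ.erase j, ((w i : ℝ) - q i) ≤ ∑ i, ((w i : ℝ) - q i) :=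
          sum_le_sum_of_subset_of_nonneg (erase_subset j univ)
            fun i _ _ => sub_nonneg.2 (hqw i)
      _ < ∑ _i : Fin n, δ / n := sum_lt_sum_of_nonempty ⟨j, mem_univ j⟩ fun i _ => by
          linarith [hwq i]
      _ = δ := by simp [mul_div_cancel₀ _ hn.ne']
  set r : Fin n → ℚ := Function.update q j (1 - ∑ i ∈ univ.erase j, q i)
  have hrj : (r j : ℝ) = w j + ∑ i ∈ univ.erase j, ((w i : ℝ) - q i) := by
    simp only [r, Function.update_self, sum_sub_distrib, hwj]
    push_cast; ring
  have hr : ∀ i, i ≠ j → r i = q i := fun i hi => Function.update_of_ne hi _ _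
  have hr0 : ∀ i, (0 : ℝ) ≤ r i := fun i => by
    by_cases hi : i = j
    · subst hi; rw [hrj]; positivity
    · rw [hr i hi]; exact_mod_cast hq0 i
  refine ⟨fun i => (r i : ℝ).toNNReal, fun i => ⟨r i, Real.coe_toNNReal _ (hr0 i)⟩, ?_,
    fun i hi => ?_, fun i => ?_⟩
  · have : ∑ i, r i = 1 := by
      rw [sum_update_of_mem (mem_univ j), sdiff_singleton_eq_erase, sub_add_cancel]
    rw [← NNReal.coe_inj]
    push_cast [Real.coe_toNNReal _ (hr0 _)]
    exact_mod_cast this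
  · rw [← NNReal.coe_le_coe, Real.coe_toNNReal _ (hr0 i), hr i hi]; exact hqw i
  · rw [Real.coe_toNNReal _ (hr0 i)]
    by_cases hi : i = j
    · subst hi; rw [hrj, abs_sub_comm, add_sub_cancel_left, abs_of_nonneg herr_nonneg]
      exact herr_lt
    · rw [hr i hi, abs_of_nonneg (sub_nonneg.2 (hqw i))]
      linarith [hwq i, div_le_self hδ.le (Nat.one_le_cast.mpr j.pos)]

theorem meanSystem_rational_approx_general (S : MeanSystem) (n : ℕ)
    (w x : Fin n → ℝ≥0) (hw : (∑ i, w i) = 1) (δ : ℝ) (hδ : 0 < δ) :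
    ∃ w' w'' : Fin n → ℝ≥0,
      (∀ i, ∃ q : ℚ, (w' i : ℝ) = q) ∧ (∑ i, w' i) = 1 ∧
      (∀ i, ∃ q : ℚ, (w'' i : ℝ) = q) ∧ (∑ i, w'' i) = 1 ∧
      S.M n w x ≤ S.M n w' x ∧ S.M n w'' x ≤ S.M n w x ∧
      (∀ i, |(w i : ℝ) - (w' i : ℝ)| < δ) ∧ (∀ i, |(w i : ℝ) - (w'' i : ℝ)| < δ) := by
  obtain ⟨j, -⟩ := nonempty_of_sum_ne_zero (hw ▸ one_ne_zero : ∑ i, w i ≠ 0)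
  have : Nonempty (Fin n) := ⟨j⟩
  obtain ⟨jmax, hmax⟩ := Finite.exists_max x
  obtain ⟨jmin, hmin⟩ := Finite.exists_min x
  obtain ⟨w', hw'_rat, hw'_sum, hw'_le, hw'_dist⟩ := exists_rat_weights_approx hw jmax hδ
  obtain ⟨w'', hw''_rat, hw''_sum, hw''_le, hw''_dist⟩ := exists_rat_weights_approx hw jmin hδ
  exact ⟨w', w'', hw'_rat, hw'_sum, hw''_rat, hw''_sum,
    S.M_le_M_of_shift_to_max hw hw'_sum hw'_le hmax,
    S.M_le_M_of_shift_to_min hw hw''_sum hw''_le hmin, hw'_dist, hw''_dist⟩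

/-- (Rational approximation of weightings) Given a system of means `M`, a weighting `w`,
arguments `x` and `δ > 0`, there are rational weightings `w', w''` within distance `δ` of `w`
in the `∞`-norm such that `M(w', x) ≥ M(w, x) ≥ M(w'', x)`. -/
theorem meanSystem_rational_approx (S : MeanSystem) (n : ℕ) (hn : 1 ≤ n)
    (w x : Fin n → ℝ≥0) (hw : (∑ i, w i) = 1) (δ : ℝ) (hδ : 0 < δ) :
    ∃ w' w'' : Fin n → ℝ≥0,
      (∀ i, ∃ q : ℚ, (w' i : ℝ) = q) ∧ (∑ i, w' i) = 1 ∧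
      (∀ i, ∃ q : ℚ, (w'' i : ℝ) = q) ∧ (∑ i, w'' i) = 1 ∧
      S.M n w x ≤ S.M n w' x ∧ S.M n w'' x ≤ S.M n w x ∧
      (∀ i, |(w i : ℝ) - (w' i : ℝ)| < δ) ∧ (∀ i, |(w i : ℝ) - (w'' i : ℝ)| < δ) :=
  meanSystem_rational_approx_general S n w x hw δ hδ
end

section
/- Let M be a system of means and p ∈ [1,∞] such that M(u_k, x) = M_p(u_k, x) for every k ≥ 1 and x ∈ (ℝ≥0)^k, where u_k = (1/k,…,1/k). Then M(w, x) = M_p(w, x) for every n ≥ 1, every w ∈ Δ_n with all coordinates rational, and every x ∈ (ℝ≥0)^n. -/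
open scoped NNReal ENNReal BigOperators

/-- If a system of means `M` agrees with the power mean `M_p` (`p ∈ [1,∞]`) on all uniform
weightings, then it agrees with `M_p` on all weightings with rational coordinates. -/
theorem meanSystem_rational_weights_eq_powerMean (S : MeanSystem)
    (p : ℝ≥0∞) (hp : 1 ≤ p)
    (huniform : ∀ (k : ℕ), 1 ≤ k → ∀ x : Fin k → ℝ≥0,
      S.M k (fun _ => (k : ℝ≥0)⁻¹) x = powerMean p (fun _ => (k : ℝ≥0)⁻¹) x)
    (n : ℕ) (hn : 1 ≤ n) (w : Fin n → ℝ≥0) (hw : (∑ i, w i) = 1)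
    (hrat : ∀ i, ∃ q : ℚ, (w i : ℝ) = q) (x : Fin n → ℝ≥0) :
    S.M n w x = powerMean p w x := by
  -- Step 1: extract a common denominator `N` and numerators `a i` with `w i = a i / N`.
  choose q hq using hrat
  have hq0 : ∀ i, 0 ≤ q i := fun i => by
    have := (w i).coe_nonneg; rw [hq i] at this; exact_mod_cast this
  set N : ℕ := ∏ i, (q i).den with hN
  have hNd : ∀ i, (q i).den ∣ N := fun i => Finset.dvd_prod_of_mem _ (Finset.mem_univ i)
  have hNpos : 0 < N := Finset.prod_pos (fun i _ => (q i).pos)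
  set a : Fin n → ℕ := fun i => (q i).num.toNat * (N / (q i).den) with ha
  have haq : ∀ i, (a i : ℚ) = q i * N := by
    intro i
    have hnum : ((q i).num.toNat : ℚ) = (q i).num := by
      exact_mod_cast Int.toNat_of_nonneg (Rat.num_nonneg.2 (hq0 i))
    have hdm : ((q i).den : ℚ) * (N / (q i).den : ℕ) = N := by
      exact_mod_cast congrArg (Nat.cast : ℕ → ℚ) (Nat.mul_div_cancel' (hNd i))
    have hqd : q i * (q i).den = (q i).num := by
      have hd : ((q i).den : ℚ) ≠ 0 := by exact_mod_cast (q i).den_nz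
      exact ((div_eq_iff hd).1 (Rat.num_div_den (q i))).symm
    push_cast [ha]
    rw [hnum, ← hqd, mul_assoc, hdm]
  have hsumq : (∑ i, q i) = 1 := by
    have h1 : (∑ i, ((q i : ℝ))) = 1 := by
      rw [show (∑ i, ((q i):ℝ)) = ∑ i, ((w i):ℝ) from
        Finset.sum_congr rfl (fun i _ => (hq i).symm)]
      exact_mod_cast congrArg (NNReal.toReal) hw
    have : ((∑ i, q i : ℚ) : ℝ) = ((1:ℚ):ℝ) := by push_cast; exact h1
    exact_mod_cast this
  have hsum : (∑ i, a i) = N := by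
    have : ((∑ i, a i : ℕ) : ℚ) = N := by
      push_cast
      rw [Finset.sum_congr rfl (fun i _ => haq i), ← Finset.sum_mul, hsumq, one_mul]
    exact_mod_cast this
  have hwa : ∀ i, w i = (a i : ℝ≥0) * (N : ℝ≥0)⁻¹ := by
    intro i
    apply NNReal.coe_injective
    have h2 : ((a i : ℚ) : ℝ) = (q i : ℝ) * N := by
      exact_mod_cast congrArg (Rat.cast : ℚ → ℝ) (haq i)
    push_cast
    rw [hq i]
    rw [show ((a i : ℕ) : ℝ) = (q i : ℝ) * N by exact_mod_cast h2]
    have hN0' : (N : ℝ) ≠ 0 := Nat.cast_ne_zero.2 hNpos.ne'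
    field_simp
  clear hq hq0 haq hsumq hw hN ha hNd
  -- Step 2: the combinatorial setup.
  have hN0 : (N : ℝ≥0) ≠ 0 := Nat.cast_ne_zero.2 hNpos.ne'
  have hNi : 0 < (N : ℝ≥0)⁻¹ := by positivity
  have e : (Σ i, Fin (a i)) ≃ Fin N :=
    Fintype.equivOfCardEq (by simp [hsum])
  set f : Fin N → Fin n := fun k => (e.symm k).1 with hf
  have hsumc : ∀ g : Fin n → ℝ≥0, (∑ k : Fin N, g (f k)) = ∑ j, (a j : ℝ≥0) * g j := by
    intro g
    rw [← Equiv.sum_comp e (fun k => g (f k))]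
    simp only [hf, Equiv.symm_apply_apply]
    rw [← Finset.univ_sigma_univ, Finset.sum_sigma]
    simp [Finset.sum_const, nsmul_eq_mul]
  have huN : (∑ _k : Fin N, (N : ℝ≥0)⁻¹) = 1 := by
    simp [Finset.sum_const, nsmul_eq_mul, mul_inv_cancel₀ hN0]
  have hwe : (fun j => ∑ i ∈ Finset.univ.filter (fun i => f i = j), (N : ℝ≥0)⁻¹) = w := by
    funext j
    rw [← Finset.sum_filter_add_sum_filter_not Finset.univ (fun i => f i = j)
      (fun _ => (N:ℝ≥0)⁻¹)] at huN
    have hval : (∑ i ∈ Finset.univ.filter (fun i => f i = j), (N : ℝ≥0)⁻¹)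
        = ∑ k : Fin N, (if f k = j then (N : ℝ≥0)⁻¹ else 0) := by
      rw [Finset.sum_filter]
    rw [hval, hsumc (fun j' => if j' = j then (N:ℝ≥0)⁻¹ else 0)]
    rw [Finset.sum_congr rfl (fun j' _ => by rw [mul_ite, mul_zero])]
    rw [Finset.sum_ite_eq' Finset.univ j (fun j' => (a j' : ℝ≥0) * (N:ℝ≥0)⁻¹)]
    simp [hwa j]
  -- Step 3: functoriality reduces to the uniform case.
  have hfun := S.functorial f (fun _ => (N : ℝ≥0)⁻¹) huN x
  rw [hwe] at hfun
  rw [hfun, huniform N hNpos (x ∘ f)]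
  -- Step 4: the power mean is also functorial.
  have hPMtop : ∀ {m : ℕ} (v y : Fin m → ℝ≥0),
      powerMean ⊤ v y = (Finset.univ.filter (fun i => 0 < v i)).sup y := by
    intro m v y; simp [powerMean]
  rcases eq_or_ne p ∞ with hpt | hpt
  · subst hpt
    rw [hPMtop, hPMtop]
    have hfl : (Finset.univ.filter (fun _ : Fin N => 0 < (N:ℝ≥0)⁻¹)) = Finset.univ := by
      simp [hNi]
    rw [hfl]
    apply le_antisymm
    · apply Finset.sup_le
      intro k _
      have hk : 0 < w (f k) := by
        rw [hwa]
        have : 0 < a (f k) := Fin.pos ((e.symm k).2)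
        positivity
      exact Finset.le_sup (f := x) (Finset.mem_filter.2 ⟨Finset.mem_univ _, hk⟩)
    · apply Finset.sup_le
      intro j hj
      have hj' : 0 < w j := (Finset.mem_filter.1 hj).2
      have haj : 0 < a j := by
        by_contra h
        rw [hwa, Nat.eq_zero_of_not_pos h] at hj'
        simp at hj'
      have := Finset.le_sup (f := x ∘ f) (s := Finset.univ)
        (Finset.mem_univ (e ⟨j, ⟨0, haj⟩⟩))
      simpa [hf] using this
  · have hp0 : p ≠ 0 := by
      intro h; rw [h] at hp; exact (by simp : ¬ ((1:ℝ≥0∞) ≤ 0)) hp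
    simp only [powerMean, if_neg hpt, if_neg hp0]
    congr 1
    simp only [Function.comp]
    rw [hsumc (fun j => (N:ℝ≥0)⁻¹ * x j ^ p.toReal)]
    refine Finset.sum_congr rfl (fun j _ => ?_)
    rw [hwa]; ring
end
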